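/- arXiv:2411.11242 — 4 statements merged into one kernel-verified Lean document; each statement's English description precedes it below -/
import Mathlib

section
/- Let B be a real Banach space. If there exist constants μ > 0 and γ < ∞ and a functional F : B → ℝ that is both μ-strongly convex and γ-smooth, then B is isomorphic to a Hilbert space: there exist an inner product ⟨·,·⟩_H on B and constants 0 < c ≤ C < ∞ such that c·‖f‖_B² ≤ ⟨f, f⟩_H ≤ C·‖f‖_B² for all f ∈ B. -/
/-!
Average the second differences `Δ_h F p = F (p + h) + F (p - h) - 2 F p` over `p` with a
translation-invariant mean on the abelian group `B`. Strong convexity and smoothness give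
`μ ‖h‖² ≤ Δ_h F ≤ γ ‖h‖²`, so the mean `q h` of `Δ_h F` obeys the same bounds, and invariance turns
the pointwise identity `Δ_{x+y} + Δ_{x-y} = Δ_y (· + x) + Δ_y (· - x) + 2 Δ_x` into the
parallelogram law for `q`. As in the Jordan–von Neumann theorem, half the polar of `q` is then an
inner product; real homogeneity comes from additivity plus the bound `|q| ≤ γ ‖·‖²`, which makes
it continuous.

The invariant mean is a Hahn–Banach extension of `0` below the sublinear functional
`f ↦ inf_a sup_x 𝔼_i f (x + a i)`, which is `≤ 0` on `f (· + a) - f` because the averages of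
`f (x + (i + 1) • a) - f (x + i • a)` telescope.
-/

open Finset
open scoped BigOperators
open QuadraticMap (polar polar_comm)

def bddFunctions (X : Type*) : Submodule ℝ (X → ℝ) where
  carrier := {f | ∃ C, ∀ x, |f x| ≤ C}
  add_mem' := by
    rintro f g ⟨C, hC⟩ ⟨D, hD⟩
    exact ⟨C + D, fun x => (abs_add_le _ _).trans (add_le_add (hC x) (hD x))⟩
  zero_mem' := ⟨0, fun x => by simp⟩
  smul_mem' := by
    rintro c f ⟨C, hC⟩
    exact ⟨|c| * C, fun x => by
      simpa [abs_mul] using mul_le_mul_of_nonneg_left (hC x) (abs_nonneg c)⟩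

instance {X : Type*} : CoeFun (bddFunctions X) (fun _ => X → ℝ) :=
  ⟨fun f => (f : X → ℝ)⟩

lemma mem_bddFunctions_of_le_of_le {X : Type*} {f : X → ℝ} {a b : ℝ} (ha : ∀ x, a ≤ f x)
    (hb : ∀ x, f x ≤ b) : f ∈ bddFunctions X :=
  ⟨max |a| |b|, fun x => abs_le_max_abs_abs (ha x) (hb x)⟩

namespace bddFunctions

variable {G : Type*} [AddCommGroup G]

def translate (a : G) (f : bddFunctions G) : bddFunctions G :=
  ⟨fun x => f (x + a), let ⟨C, hC⟩ := f.2; ⟨C, fun x => hC (x + a)⟩⟩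

@[simp]
lemma translate_apply (a : G) (f : bddFunctions G) (x : G) : translate a f x = f (x + a) :=
  rfl

noncomputable def supAvg {ι : Type*} [Fintype ι] (f : G → ℝ) (a : ι → G) : ℝ :=
  ⨆ x, 𝔼 i, f (x + a i)

section supAvg

variable {ι κ : Type*} [Fintype ι] [Fintype κ] {f g : G → ℝ} {C : ℝ}

lemma abs_expect_translates_le [Nonempty ι] (hC : ∀ x, |f x| ≤ C) (a : ι → G) (x : G) :
    |𝔼 i, f (x + a i)| ≤ C :=
  abs_le.2 ⟨le_expect univ_nonempty fun _ _ => (abs_le.1 (hC _)).1,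
    expect_le univ_nonempty fun _ _ => (abs_le.1 (hC _)).2⟩

lemma expect_translates_le_supAvg [Nonempty ι] (hC : ∀ x, |f x| ≤ C) (a : ι → G) (x : G) :
    𝔼 i, f (x + a i) ≤ supAvg f a :=
  le_ciSup ⟨C, by rintro _ ⟨y, rfl⟩; exact (abs_le.1 (abs_expect_translates_le hC a y)).2⟩ x

lemma supAvg_le {a : ι → G} {c : ℝ} (h : ∀ x, 𝔼 i, f (x + a i) ≤ c) : supAvg f a ≤ c :=
  ciSup_le h

lemma neg_le_supAvg [Nonempty ι] (hC : ∀ x, |f x| ≤ C) (a : ι → G) : -C ≤ supAvg f a :=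
  (abs_le.1 (abs_expect_translates_le hC a 0)).1.trans (expect_translates_le_supAvg hC a 0)

lemma supAvg_smul {c : ℝ} (hc : 0 ≤ c) (a : ι → G) : supAvg (c • f) a = c * supAvg f a := by
  simp only [supAvg, Pi.smul_apply, smul_eq_mul, ← mul_expect, Real.mul_iSup_of_nonneg hc]

lemma supAvg_comp_equiv (e : κ ≃ ι) (a : ι → G) : supAvg f (a ∘ e) = supAvg f a := by
  simp only [supAvg, Function.comp_apply]
  congr 1
  funext x
  exact Fintype.expect_equiv e _ _ fun _ => rfl

lemma supAvg_add_le [Nonempty ι] [Nonempty κ] (hf : ∀ x, |f x| ≤ C) {D : ℝ}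
    (hg : ∀ x, |g x| ≤ D) (a : ι → G) (b : κ → G) :
    supAvg (f + g) (fun k : ι × κ => a k.1 + b k.2) ≤ supAvg f a + supAvg g b := by
  refine supAvg_le fun x => ?_
  simp only [Pi.add_apply, expect_add_distrib]
  rw [← univ_product_univ, expect_product, expect_product]
  refine add_le_add ?_ ?_
  · rw [expect_comm]
    refine expect_le univ_nonempty fun j _ => ?_
    simpa only [add_right_comm x, add_assoc] using expect_translates_le_supAvg hf a (x + b j)
  · refine expect_le univ_nonempty fun i _ => ?_
    simpa only [add_left_comm, add_assoc] using expect_translates_le_supAvg hg b (x + a i)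

end supAvg

noncomputable def upperMean (f : bddFunctions G) : ℝ :=
  ⨅ p : Σ n, Fin (n + 1) → G, supAvg f p.2

lemma upperMean_le_supAvg (f : bddFunctions G) {ι : Type*} [Fintype ι] [Nonempty ι]
    (a : ι → G) : upperMean f ≤ supAvg f a := by
  obtain ⟨C, hC⟩ := f.2
  have hbdd : BddBelow (Set.range fun p : Σ n, Fin (n + 1) → G => supAvg f p.2) :=
    ⟨-C, by rintro _ ⟨p, rfl⟩; exact neg_le_supAvg hC p.2⟩
  obtain ⟨n, hn⟩ := Nat.exists_eq_succ_of_ne_zero (Fintype.card_ne_zero (α := ι))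
  let e : ι ≃ Fin (n + 1) := (Fintype.equivFin ι).trans (finCongr hn)
  rw [← supAvg_comp_equiv e.symm a]
  exact ciInf_le hbdd ⟨n, a ∘ e.symm⟩

lemma upperMean_le_of_forall_le {f : bddFunctions G} {c : ℝ} (h : ∀ x, f x ≤ c) :
    upperMean f ≤ c :=
  (upperMean_le_supAvg f fun _ : Unit => (0 : G)).trans (supAvg_le fun x => by simpa using h x)

lemma upperMean_smul {c : ℝ} (hc : 0 < c) (f : bddFunctions G) :
    upperMean (c • f) = c * upperMean f := by
  simp only [upperMean, Submodule.coe_smul, supAvg_smul hc.le, Real.mul_iInf_of_nonneg hc.le]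

lemma upperMean_add_le (f g : bddFunctions G) :
    upperMean (f + g) ≤ upperMean f + upperMean g := by
  obtain ⟨C, hC⟩ := f.2
  obtain ⟨D, hD⟩ := g.2
  exact le_ciInf_add_ciInf fun p p' =>
    (upperMean_le_supAvg _ _).trans (supAvg_add_le hC hD p.2 p'.2)

lemma upperMean_translate_sub_le (a : G) (f : bddFunctions G) :
    upperMean (translate a f - f) ≤ 0 := by
  obtain ⟨C, hC⟩ := f.2
  have hle : ∀ n : ℕ, upperMean (translate a f - f) ≤ 2 * C * (1 / ((n : ℝ) + 1)) := by
    intro n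
    refine (upperMean_le_supAvg _ fun i : Fin (n + 1) => (i : ℕ) • a).trans
      (supAvg_le fun x => ?_)
    have htel : 𝔼 i : Fin (n + 1), (translate a f - f : bddFunctions G) (x + (i : ℕ) • a)
        = (f (x + (n + 1) • a) - f x) * (1 / ((n : ℝ) + 1)) := by
      rw [Fintype.expect_eq_sum_div_card, Fintype.card_fin, div_eq_mul_one_div]
      push_cast
      congr 1
      simp only [Pi.sub_apply, translate_apply, add_assoc, ← succ_nsmul]
      rw [Fin.sum_univ_eq_sum_range (fun i => f (x + (i + 1) • a) - f (x + i • a)),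
        sum_range_sub (fun i => f (x + i • a)), zero_nsmul, add_zero]
    rw [htel]
    gcongr
    linarith [(abs_le.1 (hC (x + (n + 1) • a))).2, (abs_le.1 (hC x)).1]
  exact ge_of_tendsto' (by simpa using tendsto_one_div_add_atTop_nhds_zero_nat.const_mul (2 * C))
    hle

structure IsInvariantMean (Λ : bddFunctions G →ₗ[ℝ] ℝ) : Prop where
  le_of_forall_le {f : bddFunctions G} {c : ℝ} : (∀ x, f x ≤ c) → Λ f ≤ c
  map_translate (a : G) (f : bddFunctions G) : Λ (translate a f) = Λ f

lemma IsInvariantMean.le_of_forall_ge {Λ : bddFunctions G →ₗ[ℝ] ℝ} (hΛ : IsInvariantMean Λ)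
    {f : bddFunctions G} {c : ℝ} (h : ∀ x, c ≤ f x) : c ≤ Λ f := by
  have := hΛ.le_of_forall_le (f := -f) (c := -c) fun x => neg_le_neg (h x)
  rwa [map_neg, neg_le_neg_iff] at this

theorem exists_isInvariantMean : ∃ Λ : bddFunctions G →ₗ[ℝ] ℝ, IsInvariantMean Λ := by
  have hzero : upperMean (0 : bddFunctions G) = 0 := by
    have := upperMean_smul two_pos (0 : bddFunctions G)
    rw [smul_zero] at this
    linarith
  obtain ⟨Λ, -, hΛ⟩ := exists_extension_of_le_sublinear (E := bddFunctions G) ⟨⊥, 0⟩ upperMean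
    (fun _ => upperMean_smul) upperMean_add_le (by
      rintro ⟨f, hf⟩
      rcases (Submodule.mem_bot ℝ).1 hf with rfl
      exact hzero.ge)
  refine ⟨Λ, fun h => (hΛ _).trans (upperMean_le_of_forall_le h), fun a f => ?_⟩
  have h₁ := (hΛ _).trans (upperMean_translate_sub_le a f)
  have h₂ := (hΛ _).trans (upperMean_translate_sub_le (-a) (translate a f))
  have hback : translate (-a) (translate a f) = f := by ext x; simp
  rw [hback, map_sub] at h₂
  rw [map_sub] at h₁
  linarith

end bddFunctions

def ParallelogramLaw {E : Type*} [AddCommGroup E] (q : E → ℝ) : Prop :=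
  ∀ x y, q (x + y) + q (x - y) = 2 * q x + 2 * q y

namespace ParallelogramLaw

section AddCommGroup

variable {E : Type*} [AddCommGroup E] {q : E → ℝ}

lemma map_zero (hpar : ParallelogramLaw q) : q 0 = 0 := by
  have := hpar 0 0
  rw [add_zero, sub_zero] at this
  linarith

lemma polar_self (hpar : ParallelogramLaw q) (x : E) : polar q x x = 2 * q x := by
  have := hpar x x
  rw [sub_self, hpar.map_zero] at this
  rw [polar]
  linarith

lemma two_mul_polar (hpar : ParallelogramLaw q) (x y : E) :
    2 * polar q x y = q (x + y) - q (x - y) := by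
  rw [polar]
  linarith [hpar x y]

lemma polar_add_left (hpar : ParallelogramLaw q) (x x' y : E) :
    polar q (x + x') y = polar q x y + polar q x' y := by
  -- `h₁ - h₂` and `h₃ - h₄` both evaluate `q (x + x' + y + y) - q (x + x' - y - y)`
  have h₁ := hpar (x + y) (x' + y)
  have h₂ := hpar (x - y) (x' - y)
  have h₃ := hpar (x + x' + y) y
  have h₄ := hpar (x + x' - y) y
  rw [show x + y + (x' + y) = x + x' + y + y by abel, show x + y - (x' + y) = x - x' by abel]
    at h₁
  rw [show x - y + (x' - y) = x + x' - y - y by abel, show x - y - (x' - y) = x - x' by abel]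
    at h₂
  rw [add_sub_cancel_right] at h₃
  rw [sub_add_cancel] at h₄
  linarith [hpar.two_mul_polar x y, hpar.two_mul_polar x' y, hpar.two_mul_polar (x + x') y]

def polarAddHom (hpar : ParallelogramLaw q) (y : E) : E →+ ℝ :=
  AddMonoidHom.mk' (fun x => polar q x y) fun x x' => hpar.polar_add_left x x' y

end AddCommGroup

variable {E : Type*} [SeminormedAddCommGroup E] {q : E → ℝ} {K : ℝ}

lemma continuous_polarAddHom (hpar : ParallelogramLaw q) (hK : ∀ x, |q x| ≤ K * ‖x‖ ^ 2)
    (y : E) : Continuous (hpar.polarAddHom y) := by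
  have hK' : ∀ x, |q x| ≤ |K| * ‖x‖ ^ 2 := fun x =>
    (hK x).trans (mul_le_mul_of_nonneg_right (le_abs_self K) (by positivity))
  refine (hpar.polarAddHom y).continuous_of_isBounded_nhds_zero
    (Metric.ball_mem_nhds 0 one_pos) ?_
  refine isBounded_iff_forall_norm_le.2 ⟨|K| * ((1 + ‖y‖) ^ 2 + 1 + ‖y‖ ^ 2), ?_⟩
  rintro _ ⟨x, hx, rfl⟩
  rw [mem_ball_zero_iff] at hx
  have hxy : ‖x + y‖ ≤ 1 + ‖y‖ := (norm_add_le x y).trans (by linarith)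
  calc ‖polar q x y‖ ≤ |q (x + y)| + |q x| + |q y| := by
        rw [Real.norm_eq_abs, polar]
        linarith [abs_sub (q (x + y)) (q x), abs_sub (q (x + y) - q x) (q y)]
    _ ≤ |K| * ‖x + y‖ ^ 2 + |K| * ‖x‖ ^ 2 + |K| * ‖y‖ ^ 2 := by gcongr <;> apply hK'
    _ ≤ |K| * ((1 + ‖y‖) ^ 2 + 1 + ‖y‖ ^ 2) := by
        rw [← mul_add, ← mul_add]
        gcongr
        exact pow_le_one₀ (norm_nonneg x) hx.le

lemma polar_smul_left [NormedSpace ℝ E] (hpar : ParallelogramLaw q)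
    (hK : ∀ x, |q x| ≤ K * ‖x‖ ^ 2) (a : ℝ) (x y : E) : polar q (a • x) y = a * polar q x y :=
  map_real_smul (hpar.polarAddHom y) (hpar.continuous_polarAddHom hK y) a x

end ParallelogramLaw

section SecondDifference

variable {G : Type*} [AddCommGroup G]

def secondDiff (F : G → ℝ) (h p : G) : ℝ :=
  F (p + h) + F (p - h) - 2 * F p

lemma secondDiff_add_add_secondDiff_sub (F : G → ℝ) (x y p : G) :
    secondDiff F (x + y) p + secondDiff F (x - y) p
      = secondDiff F y (p + x) + secondDiff F y (p + -x) + 2 * secondDiff F x p := by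
  simp only [secondDiff]
  rw [show p + (x + y) = p + x + y by abel, show p - (x + y) = p + -x - y by abel,
    show p + (x - y) = p + x - y by abel, show p - (x - y) = p + -x + y by abel,
    show p - x = p + -x by abel]
  ring

lemma bddFunctions.IsInvariantMean.parallelogramLaw_secondDiff
    {Λ : bddFunctions G →ₗ[ℝ] ℝ} (hΛ : bddFunctions.IsInvariantMean Λ) {F : G → ℝ}
    (hF : ∀ h, secondDiff F h ∈ bddFunctions G) :
    ParallelogramLaw fun h => Λ ⟨secondDiff F h, hF h⟩ := by
  intro x y
  have hsum : (⟨_, hF (x + y)⟩ + ⟨_, hF (x - y)⟩ : bddFunctions G)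
      = translate x ⟨_, hF y⟩ + translate (-x) ⟨_, hF y⟩ + (2 : ℝ) • ⟨_, hF x⟩ :=
    Subtype.ext (funext (secondDiff_add_add_secondDiff_sub F x y))
  have := congrArg Λ hsum
  rw [map_add, map_add, map_add, map_smul, hΛ.map_translate, hΛ.map_translate,
    smul_eq_mul] at this
  linarith

end SecondDifference

section StrongConvexity

variable {E : Type*} [SeminormedAddCommGroup E] [NormedSpace ℝ E] {F : E → ℝ}

lemma le_secondDiff_of_strongConvex {μ : ℝ} (hsc : ∀ f₀ : E, ∃ g : E →L[ℝ] ℝ, ∀ f : E,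
      F f - F f₀ ≥ g (f - f₀) + μ / 2 * ‖f - f₀‖ ^ 2) (h p : E) :
    μ * ‖h‖ ^ 2 ≤ secondDiff F h p := by
  obtain ⟨g, hg⟩ := hsc p
  have h₁ := hg (p + h)
  have h₂ := hg (p - h)
  rw [add_sub_cancel_left] at h₁
  rw [sub_sub_cancel_left, map_neg, norm_neg] at h₂
  rw [secondDiff]
  linarith

lemma secondDiff_le_of_smooth {γ : ℝ} (hsm : ∀ f₀ : E, ∃ g : E →L[ℝ] ℝ, ∀ f : E,
      F f - F f₀ ≤ g (f - f₀) + γ / 2 * ‖f - f₀‖ ^ 2) (h p : E) :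
    secondDiff F h p ≤ γ * ‖h‖ ^ 2 := by
  obtain ⟨g, hg⟩ := hsm p
  have h₁ := hg (p + h)
  have h₂ := hg (p - h)
  rw [add_sub_cancel_left] at h₁
  rw [sub_sub_cancel_left, map_neg, norm_neg] at h₂
  rw [secondDiff]
  linarith

end StrongConvexity

theorem stmt_2_general {B : Type*} [NormedAddCommGroup B] [NormedSpace ℝ B]
    (μ γ : ℝ) (hμ : 0 < μ) (F : B → ℝ)
    (hsc : ∀ f₀ : B, ∃ g : B →L[ℝ] ℝ, ∀ f : B,
      F f - F f₀ ≥ g (f - f₀) + μ / 2 * ‖f - f₀‖ ^ 2)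
    (hsm : ∀ f₀ : B, ∃ g : B →L[ℝ] ℝ, ∀ f : B,
      F f - F f₀ ≤ g (f - f₀) + γ / 2 * ‖f - f₀‖ ^ 2) :
    ∃ innerH : B → B → ℝ,
      (∀ f g : B, innerH f g = innerH g f) ∧
      (∀ (a : ℝ) (f f' g : B), innerH (a • f + f') g = a * innerH f g + innerH f' g) ∧
      ∃ c C : ℝ, 0 < c ∧ c ≤ C ∧
        ∀ f : B, c * ‖f‖ ^ 2 ≤ innerH f f ∧ innerH f f ≤ C * ‖f‖ ^ 2 := by
  obtain ⟨Λ, hΛ⟩ := bddFunctions.exists_isInvariantMean (G := B)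
  have hlo := le_secondDiff_of_strongConvex hsc
  have hhi := secondDiff_le_of_smooth hsm
  have hD : ∀ h, secondDiff F h ∈ bddFunctions B := fun h =>
    mem_bddFunctions_of_le_of_le (hlo h) (hhi h)
  set q : B → ℝ := fun h => Λ ⟨_, hD h⟩
  have hq : ∀ h, μ * ‖h‖ ^ 2 ≤ q h ∧ q h ≤ γ * ‖h‖ ^ 2 := fun h =>
    ⟨hΛ.le_of_forall_ge (hlo h), hΛ.le_of_forall_le (hhi h)⟩
  have hpar : ParallelogramLaw q := hΛ.parallelogramLaw_secondDiff hD
  have hK : ∀ h, |q h| ≤ γ * ‖h‖ ^ 2 := fun h => by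
    have := mul_nonneg hμ.le (sq_nonneg ‖h‖)
    exact abs_le.2 ⟨by linarith [hq h], (hq h).2⟩
  refine ⟨fun f g => polar q f g / 2, fun f g => ?_, fun a f f' g => ?_, μ, max μ γ, hμ,
    le_max_left μ γ, fun f => ?_⟩ <;> dsimp only
  · rw [polar_comm]
  · rw [hpar.polar_add_left, hpar.polar_smul_left hK]
    ring
  · rw [hpar.polar_self, mul_div_cancel_left₀ _ two_ne_zero]
    exact ⟨(hq f).1, (hq f).2.trans (by gcongr; exact le_max_right μ γ)⟩

/-- If a real Banach space `B` admits a functional that is both `μ`-strongly convex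
(`μ > 0`) and `γ`-smooth, then `B` is isomorphic to a Hilbert space: there is an inner product
(symmetric bilinear form) on `B` whose associated quadratic form is equivalent to `‖·‖²`. -/
theorem stmt_2 {B : Type*} [NormedAddCommGroup B] [NormedSpace ℝ B] [CompleteSpace B]
    (μ γ : ℝ) (hμ : 0 < μ) (F : B → ℝ)
    (hsc : ∀ f₀ : B, ∃ g : B →L[ℝ] ℝ, ∀ f : B,
      F f - F f₀ ≥ g (f - f₀) + μ / 2 * ‖f - f₀‖ ^ 2)
    (hsm : ∀ f₀ : B, ∃ g : B →L[ℝ] ℝ, ∀ f : B,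
      F f - F f₀ ≤ g (f - f₀) + γ / 2 * ‖f - f₀‖ ^ 2) :
    ∃ innerH : B → B → ℝ,
      (∀ f g : B, innerH f g = innerH g f) ∧
      (∀ (a : ℝ) (f f' g : B), innerH (a • f + f') g = a * innerH f g + innerH f' g) ∧
      ∃ c C : ℝ, 0 < c ∧ c ≤ C ∧
        ∀ f : B, c * ‖f‖ ^ 2 ≤ innerH f f ∧ innerH f f ≤ C * ‖f‖ ^ 2 :=
  stmt_2_general μ γ hμ F hsc hsm
end

section
/- Let B be a real Banach space, L, Φ : B → ℝ functionals, and DL, DΦ : B → B* maps such that: (i) L is μ-strongly convex and γ-smooth with subgradient selection DL; (ii) Φ is ν-strongly convex with subgradient selection DΦ; (iii) DΦ satisfies the cocoercivity inequality ⟨f − f', DΦ(f) − DΦ(f')⟩ ≥ κ·‖DΦ(f) − DΦ(f')‖_{B*}² for all f, f' ∈ B and some κ > 0. Let f* ∈ B be a global minimizer of L, and let (f_k)_{k≥0} be a sequence in B satisfying the mirror descent recursion DΦ(f_k) = DΦ(f_{k−1}) − η·DL(f_{k−1}) for all k ≥ 1, with step size η > 0 satisfying η ≤ ν/γ and μ(2ν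 − γη)κ²η ≤ 1. Then the convergence rate is linear: for every k ≥ 0, L(f_k) − L(f*) ≤ (1 − μ(2ν − γη)κ²η)^k · (L(f₀) − L(f*)). -/
/-!
Strong convexity of `L` gives the Polyak–Łojasiewicz inequality
`2μ (L f - L f*) ≤ ‖DL f‖²`. In a mirror step `DΦ f_{k+1} - DΦ f_k = -η DL f_k`, so strong
monotonicity of `DΦ` and `γ`-smoothness of `L` make `L` decrease by at least
`(2ν - γη)/(2η) ‖f_{k+1} - f_k‖²`, while cocoercivity of `DΦ` forces the step to be long:
`‖f_{k+1} - f_k‖ ≥ κη ‖DL f_k‖`. Chaining the three bounds contracts `L f_k - L f*` by the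
factor `1 - μ(2ν - γη)κ²η` at every step.
-/

namespace MirrorDescent

variable {E : Type*} [SeminormedAddCommGroup E] [NormedSpace ℝ E]

def StronglyConvexWith (F : E → ℝ) (DF : E → E →L[ℝ] ℝ) (μ : ℝ) : Prop :=
  ∀ f f₀ : E, F f - F f₀ ≥ DF f₀ (f - f₀) + μ / 2 * ‖f - f₀‖ ^ 2

def SmoothWith (F : E → ℝ) (DF : E → E →L[ℝ] ℝ) (γ : ℝ) : Prop :=
  ∀ f f₀ : E, F f - F f₀ ≤ DF f₀ (f - f₀) + γ / 2 * ‖f - f₀‖ ^ 2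

def Cocoercive (DF : E → E →L[ℝ] ℝ) (κ : ℝ) : Prop :=
  ∀ f f' : E, (DF f - DF f') (f - f') ≥ κ * ‖DF f - DF f'‖ ^ 2

variable {F : E → ℝ} {DF : E → E →L[ℝ] ℝ}

theorem StronglyConvexWith.two_mul_sub_le_sq_norm {μ : ℝ} (h : StronglyConvexWith F DF μ)
    (hμ : 0 < μ) (f f' : E) : 2 * μ * (F f - F f') ≤ ‖DF f‖ ^ 2 := by
  have hsc := h f' f
  have hdual : -(‖DF f‖ * ‖f' - f‖) ≤ DF f (f' - f) :=
    neg_le_of_abs_le ((DF f).le_opNorm (f' - f))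
  nlinarith [sq_nonneg (‖DF f‖ - μ * ‖f' - f‖)]

theorem StronglyConvexWith.mul_sq_norm_le {ν : ℝ} (h : StronglyConvexWith F DF ν) (f g : E) :
    ν * ‖g - f‖ ^ 2 ≤ (DF g - DF f) (g - f) := by
  have hfg := h f g
  have hgf := h g f
  rw [← neg_sub g f, map_neg, norm_neg] at hfg
  rw [sub_apply]
  linarith

theorem Cocoercive.mul_norm_le {κ : ℝ} (h : Cocoercive DF κ) (f g : E) :
    κ * ‖DF g - DF f‖ ≤ ‖g - f‖ := by
  rcases (norm_nonneg (DF g - DF f)).eq_or_lt with hzero | hpos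
  · rw [← hzero, mul_zero]
    exact norm_nonneg _
  · refine le_of_mul_le_mul_right ?_ hpos
    calc κ * ‖DF g - DF f‖ * ‖DF g - DF f‖ = κ * ‖DF g - DF f‖ ^ 2 := by ring
      _ ≤ (DF g - DF f) (g - f) := h g f
      _ ≤ ‖DF g - DF f‖ * ‖g - f‖ := le_of_abs_le ((DF g - DF f).le_opNorm (g - f))
      _ = ‖g - f‖ * ‖DF g - DF f‖ := mul_comm _ _

section MirrorStep

variable {L Φ : E → ℝ} {DL DΦ : E → E →L[ℝ] ℝ} {μ γ ν κ η : ℝ} {f g : E}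

theorem mul_sub_le_of_mirror_step (hL : SmoothWith L DL γ) (hΦ : StronglyConvexWith Φ DΦ ν)
    (hη : 0 ≤ η) (hstep : DΦ g = DΦ f - η • DL f) :
    η * (L g - L f) ≤ -((2 * ν - γ * η) / 2 * ‖g - f‖ ^ 2) := by
  have hmono := hΦ.mul_sq_norm_le f g
  rw [hstep, sub_sub_cancel_left, neg_apply, smul_apply, smul_eq_mul] at hmono
  nlinarith [mul_le_mul_of_nonneg_left (hL g f) hη]

theorem mul_norm_le_of_mirror_step (hco : Cocoercive DΦ κ) (hη : 0 ≤ η)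
    (hstep : DΦ g = DΦ f - η • DL f) : κ * (η * ‖DL f‖) ≤ ‖g - f‖ := by
  have hlen := hco.mul_norm_le f g
  rwa [hstep, sub_sub_cancel_left, norm_neg, norm_smul, Real.norm_of_nonneg hη] at hlen

theorem sub_le_of_mirror_step (hLsc : StronglyConvexWith L DL μ) (hLsm : SmoothWith L DL γ)
    (hΦ : StronglyConvexWith Φ DΦ ν) (hco : Cocoercive DΦ κ) (hμ : 0 < μ) (hκ : 0 ≤ κ)
    (hη : 0 < η) (hγη : γ * η ≤ 2 * ν) (hstep : DΦ g = DΦ f - η • DL f) (fstar : E) :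
    L g - L fstar ≤ (1 - μ * (2 * ν - γ * η) * κ ^ 2 * η) * (L f - L fstar) := by
  have hgap : 0 ≤ (2 * ν - γ * η) / 2 := by linarith
  have hlen : (κ * (η * ‖DL f‖)) ^ 2 ≤ ‖g - f‖ ^ 2 :=
    pow_le_pow_left₀ (by positivity) (mul_norm_le_of_mirror_step hco hη.le hstep) 2
  have hPL := hLsc.two_mul_sub_le_sq_norm hμ f fstar
  have hdecrease :
      η * (L g - L f) ≤ η * (-(μ * (2 * ν - γ * η) * κ ^ 2 * η) * (L f - L fstar)) :=
    calc η * (L g - L f) ≤ -((2 * ν - γ * η) / 2 * ‖g - f‖ ^ 2) :=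
          mul_sub_le_of_mirror_step hLsm hΦ hη.le hstep
      _ ≤ -((2 * ν - γ * η) / 2 * (κ * η) ^ 2 * ‖DL f‖ ^ 2) := by
          nlinarith [mul_le_mul_of_nonneg_left hlen hgap]
      _ ≤ -((2 * ν - γ * η) / 2 * (κ * η) ^ 2 * (2 * μ * (L f - L fstar))) := by
          have hcoef : 0 ≤ (2 * ν - γ * η) / 2 * (κ * η) ^ 2 := by positivity
          nlinarith [mul_le_mul_of_nonneg_left hPL hcoef]
      _ = η * (-(μ * (2 * ν - γ * η) * κ ^ 2 * η) * (L f - L fstar)) := by ring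
  linarith [le_of_mul_le_mul_left hdecrease hη]

end MirrorStep

end MirrorDescent

theorem stmt_3_general {B : Type*} [NormedAddCommGroup B] [NormedSpace ℝ B]
    (L Φ : B → ℝ) (DL DΦ : B → (B →L[ℝ] ℝ)) (μ γ ν κ η : ℝ)
    (hμ : 0 < μ) (hγ : 0 < γ) (hκ : 0 < κ) (hη : 0 < η)
    (hη1 : η ≤ ν / γ) (hη2 : μ * (2 * ν - γ * η) * κ ^ 2 * η ≤ 1)
    (hLsc : ∀ f f₀ : B, L f - L f₀ ≥ DL f₀ (f - f₀) + μ / 2 * ‖f - f₀‖ ^ 2)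
    (hLsm : ∀ f f₀ : B, L f - L f₀ ≤ DL f₀ (f - f₀) + γ / 2 * ‖f - f₀‖ ^ 2)
    (hΦsc : ∀ f f₀ : B, Φ f - Φ f₀ ≥ DΦ f₀ (f - f₀) + ν / 2 * ‖f - f₀‖ ^ 2)
    (hco : ∀ f f' : B, (DΦ f - DΦ f') (f - f') ≥ κ * ‖DΦ f - DΦ f'‖ ^ 2)
    (fstar : B)
    (fs : ℕ → B)
    (hrec : ∀ k : ℕ, DΦ (fs (k + 1)) = DΦ (fs k) - η • DL (fs k)) :
    ∀ k : ℕ, L (fs k) - L fstar ≤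
      (1 - μ * (2 * ν - γ * η) * κ ^ 2 * η) ^ k * (L (fs 0) - L fstar) := by
  have hγη : γ * η ≤ ν := by rwa [le_div_iff₀ hγ, mul_comm] at hη1
  have hγη' : γ * η ≤ 2 * ν := by linarith [mul_pos hγ hη]
  intro k
  exact le_geom (u := fun k => L (fs k) - L fstar) (by linarith) k fun j _ =>
    MirrorDescent.sub_le_of_mirror_step hLsc hLsm hΦsc hco hμ hκ.le hη hγη' (hrec j) fstar

/-- Linear rate of mirror descent for a `μ`-strongly convex, `γ`-smooth loss `L`
with a `ν`-strongly convex mirror map `Φ` whose subgradient map is `κ`-cocoercive. -/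
theorem stmt_3 {B : Type*} [NormedAddCommGroup B] [NormedSpace ℝ B] [CompleteSpace B]
    (L Φ : B → ℝ) (DL DΦ : B → (B →L[ℝ] ℝ)) (μ γ ν κ η : ℝ)
    (hμ : 0 < μ) (hγ : 0 < γ) (hν : 0 < ν) (hκ : 0 < κ) (hη : 0 < η)
    (hη1 : η ≤ ν / γ) (hη2 : μ * (2 * ν - γ * η) * κ ^ 2 * η ≤ 1)
    (hLsc : ∀ f f₀ : B, L f - L f₀ ≥ DL f₀ (f - f₀) + μ / 2 * ‖f - f₀‖ ^ 2)
    (hLsm : ∀ f f₀ : B, L f - L f₀ ≤ DL f₀ (f - f₀) + γ / 2 * ‖f - f₀‖ ^ 2)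
    (hΦsc : ∀ f f₀ : B, Φ f - Φ f₀ ≥ DΦ f₀ (f - f₀) + ν / 2 * ‖f - f₀‖ ^ 2)
    (hco : ∀ f f' : B, (DΦ f - DΦ f') (f - f') ≥ κ * ‖DΦ f - DΦ f'‖ ^ 2)
    (fstar : B) (hmin : ∀ f : B, L fstar ≤ L f)
    (fs : ℕ → B)
    (hrec : ∀ k : ℕ, DΦ (fs (k + 1)) = DΦ (fs k) - η • DL (fs k)) :
    ∀ k : ℕ, L (fs k) - L fstar ≤
      (1 - μ * (2 * ν - γ * η) * κ ^ 2 * η) ^ k * (L (fs 0) - L fstar) :=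
  stmt_3_general L Φ DL DΦ μ γ ν κ η hμ hγ hκ hη hη1 hη2 hLsc hLsm hΦsc hco fstar fs hrec
end

section
/- Let B be a real Banach space, S ⊆ B a convex set, and L : B → ℝ a convex functional with subgradient selection DL : B → B* satisfying the Lipschitz bound ‖DL(f)‖_{B*} ≤ Λ for all f ∈ B. Let Φ : B → ℝ be Gâteaux differentiable with derivative DΦ : B → B* and μ-strongly convex with subgradient selection DΦ (μ > 0). Let f* ∈ S be a minimizer of L over S, and let f₁ ∈ S satisfy D_Φ(f*, f₁) ≤ R² for some R > 0. Fix t ≥ 1 and set η = (R/Λ)·√(2μ/t). Suppose f₁, …, f_t ∈ S and h₂, …, h_{t+1} ∈ B satisfy, for each 1 ≤ i ≤ t: DΦ(h_{i+1}) = DΦ(f_i) − η·DL(f_i), and f_{i+1} minimizes g ↦ D_Φ(g, h_{i+1}) over S. Then L((1/t)·Σ_{i=1}^t f_i) − L(f*) ≤ √2·R·Λ/√(μ·t); in particular the projected mirror descent algorithm converges at rate O(1/√t). -/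
open Filter Topology

/-- Bregman divergence of `Φ` with derivative selection `DΦ`. -/
noncomputable def bregmanDiv {B : Type*} [NormedAddCommGroup B] [NormedSpace ℝ B]
    (Φ : B → ℝ) (DΦ : B → (B →L[ℝ] ℝ)) (f f' : B) : ℝ :=
  Φ f - Φ f' - DΦ f' (f - f')

/-!
Each mirror step is analysed through the Bregman three-point identity and the generalized
Pythagorean inequality `D(u, x') + D(x', y) ≤ D(u, y)` for the Bregman projection `x'` of `y`
onto `S`, itself the first-order optimality condition of the projection. Strong convexity of `Φ`
absorbs the linear error term, giving `η ⟪DL fᵢ, fᵢ - u⟫ ≤ D(u, fᵢ) - D(u, fᵢ₊₁) + η²Λ²/(2μ)`.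
Summing telescopes to `η ∑ ⟪DL fᵢ, fᵢ - u⟫ ≤ D(u, f₁) + t η²Λ²/(2μ)`; convexity of `L` bounds the
left side from below by `η t (L(average) - L u)`, and the step size `η` balances the two terms.
-/

section Bregman

variable {B : Type*} [NormedAddCommGroup B] [NormedSpace ℝ B]
  {Φ : B → ℝ} {DΦ : B → (B →L[ℝ] ℝ)}

theorem bregmanDiv_add_bregmanDiv_sub (x y z : B) :
    bregmanDiv Φ DΦ x y + bregmanDiv Φ DΦ y z - bregmanDiv Φ DΦ x z
      = DΦ z (x - y) - DΦ y (x - y) := by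
  simp only [bregmanDiv, map_sub]
  ring

theorem sq_norm_le_bregmanDiv {μ : ℝ}
    (hΦ : ∀ f f₀ : B, Φ f - Φ f₀ ≥ DΦ f₀ (f - f₀) + μ / 2 * ‖f - f₀‖ ^ 2) (x y : B) :
    μ / 2 * ‖x - y‖ ^ 2 ≤ bregmanDiv Φ DΦ x y := by
  have := hΦ x y
  simp only [bregmanDiv]
  linarith

theorem IsMinOn.nonneg_of_tendsto_slope {ψ : B → ℝ} {S : Set B} {x g : B} {d : ℝ}
    (hS : Convex ℝ S) (hmin : IsMinOn ψ S x) (hx : x ∈ S) (hg : g ∈ S)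
    (hd : Tendsto (fun s : ℝ => (ψ (x + s • (g - x)) - ψ x) / s) (𝓝[>] 0) (𝓝 d)) :
    0 ≤ d := by
  refine ge_of_tendsto hd ?_
  filter_upwards [Ioo_mem_nhdsGT (zero_lt_one' ℝ)] with s ⟨hs0, hs1⟩
  have hmem : x + s • (g - x) ∈ S := hS.add_smul_sub_mem hx hg ⟨hs0.le, hs1.le⟩
  exact div_nonneg (sub_nonneg.mpr (isMinOn_iff.mp hmin _ hmem)) hs0.le

theorem apply_sub_le_of_isMinOn_bregmanDiv {S : Set B} {x y g : B} (hS : Convex ℝ S)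
    (hmin : IsMinOn (bregmanDiv Φ DΦ · y) S x) (hx : x ∈ S) (hg : g ∈ S)
    (hΦ : Tendsto (fun s : ℝ => (Φ (x + s • (g - x)) - Φ x) / s) (𝓝[>] 0)
      (𝓝 (DΦ x (g - x)))) :
    DΦ y (g - x) ≤ DΦ x (g - x) := by
  rw [← sub_nonneg]
  refine hmin.nonneg_of_tendsto_slope hS hx hg ((hΦ.sub_const (DΦ y (g - x))).congr' ?_)
  filter_upwards [self_mem_nhdsWithin] with s (hs : 0 < s)
  have hlin : DΦ y (x + s • (g - x) - y) = DΦ y (x - y) + s * DΦ y (g - x) := by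
    rw [show x + s • (g - x) - y = (x - y) + s • (g - x) by abel, map_add, map_smul,
      smul_eq_mul]
  simp only [bregmanDiv, hlin]
  field_simp
  ring

/-- Generalized Pythagorean inequality for the Bregman projection `x` of `y` onto `S`. -/
theorem bregmanDiv_add_bregmanDiv_le_of_isMinOn {S : Set B} {x y g : B} (hS : Convex ℝ S)
    (hmin : IsMinOn (bregmanDiv Φ DΦ · y) S x) (hx : x ∈ S) (hg : g ∈ S)
    (hΦ : Tendsto (fun s : ℝ => (Φ (x + s • (g - x)) - Φ x) / s) (𝓝[>] 0)
      (𝓝 (DΦ x (g - x)))) :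
    bregmanDiv Φ DΦ g x + bregmanDiv Φ DΦ x y ≤ bregmanDiv Φ DΦ g y := by
  have h := bregmanDiv_add_bregmanDiv_sub (Φ := Φ) (DΦ := DΦ) g x y
  linarith [apply_sub_le_of_isMinOn_bregmanDiv hS hmin hx hg hΦ]

end Bregman

theorem mul_apply_sub_sq_norm_le {B : Type*} [NormedAddCommGroup B] [NormedSpace ℝ B]
    (p : B →L[ℝ] ℝ) (v : B) (η : ℝ) {μ : ℝ} (hμ : 0 < μ) :
    η * p v - μ / 2 * ‖v‖ ^ 2 ≤ η ^ 2 * ‖p‖ ^ 2 / (2 * μ) := by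
  have hpv : η * p v ≤ |η| * ‖p‖ * ‖v‖ := by
    calc η * p v ≤ |η * p v| := le_abs_self _
      _ = |η| * ‖p v‖ := by rw [abs_mul, Real.norm_eq_abs]
      _ ≤ |η| * (‖p‖ * ‖v‖) := by gcongr; exact p.le_opNorm v
      _ = |η| * ‖p‖ * ‖v‖ := by ring
  rw [le_div_iff₀ (by positivity)]
  nlinarith [sq_nonneg (|η| * ‖p‖ - μ * ‖v‖), sq_abs η]

section MirrorDescent

variable {B : Type*} [NormedAddCommGroup B] [NormedSpace ℝ B]
  {S : Set B} {Φ : B → ℝ} {DΦ : B → (B →L[ℝ] ℝ)} {μ η : ℝ}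

theorem mirror_descent_step (hS : Convex ℝ S) (hμ : 0 < μ)
    (hΦsc : ∀ f f₀ : B, Φ f - Φ f₀ ≥ DΦ f₀ (f - f₀) + μ / 2 * ‖f - f₀‖ ^ 2)
    {x y x' u : B} {p : B →L[ℝ] ℝ} (hy : DΦ y = DΦ x - η • p)
    (hproj : IsMinOn (bregmanDiv Φ DΦ · y) S x') (hx' : x' ∈ S) (hu : u ∈ S)
    (hΦ : Tendsto (fun s : ℝ => (Φ (x' + s • (u - x')) - Φ x') / s) (𝓝[>] 0)
      (𝓝 (DΦ x' (u - x')))) :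
    η * p (x - u) ≤
      bregmanDiv Φ DΦ u x - bregmanDiv Φ DΦ u x' + η ^ 2 * ‖p‖ ^ 2 / (2 * μ) := by
  have hyv : ∀ v, DΦ y v - DΦ x v = -(η * p v) := fun v => by
    rw [hy]; simp
  have hux := bregmanDiv_add_bregmanDiv_sub (Φ := Φ) (DΦ := DΦ) u x y
  have hx'x := bregmanDiv_add_bregmanDiv_sub (Φ := Φ) (DΦ := DΦ) x' x y
  rw [hyv] at hux hx'x
  have hpyth := bregmanDiv_add_bregmanDiv_le_of_isMinOn hS hproj hx' hu hΦ
  have hsc := sq_norm_le_bregmanDiv hΦsc x' x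
  have hyoung := mul_apply_sub_sq_norm_le p (x - x') η hμ
  rw [norm_sub_rev] at hsc
  simp only [map_sub] at hux hx'x hyoung ⊢
  linarith

theorem mirror_descent_regret (hS : Convex ℝ S) (hμ : 0 < μ)
    (hΦsc : ∀ f f₀ : B, Φ f - Φ f₀ ≥ DΦ f₀ (f - f₀) + μ / 2 * ‖f - f₀‖ ^ 2)
    (hΦ : ∀ x v : B, Tendsto (fun s : ℝ => (Φ (x + s • v) - Φ x) / s) (𝓝[>] 0) (𝓝 (DΦ x v)))
    {Λ : ℝ} {t : ℕ} {f h : ℕ → B} {p : ℕ → B →L[ℝ] ℝ} (hp : ∀ i, ‖p i‖ ≤ Λ) {u : B}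
    (hu : u ∈ S) (hstep : ∀ i : ℕ, 1 ≤ i → i ≤ t → DΦ (h (i + 1)) = DΦ (f i) - η • p i)
    (hproj : ∀ i : ℕ, 1 ≤ i → i ≤ t → f (i + 1) ∈ S ∧
      ∀ g ∈ S, bregmanDiv Φ DΦ (f (i + 1)) (h (i + 1)) ≤ bregmanDiv Φ DΦ g (h (i + 1))) :
    η * ∑ i ∈ Finset.Icc 1 t, p i (f i - u) ≤
      bregmanDiv Φ DΦ u (f 1) + t * (η ^ 2 * Λ ^ 2 / (2 * μ)) := by
  set D : ℕ → ℝ := fun i => bregmanDiv Φ DΦ u (f i)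
  have hstepwise : ∀ i ∈ Finset.Icc 1 t,
      η * p i (f i - u) ≤ (D i - D (i + 1)) + η ^ 2 * Λ ^ 2 / (2 * μ) := by
    intro i hi
    obtain ⟨hi1, hit⟩ := Finset.mem_Icc.mp hi
    obtain ⟨hmem, hmin⟩ := hproj i hi1 hit
    have hpΛ : ‖p i‖ ^ 2 ≤ Λ ^ 2 := pow_le_pow_left₀ (norm_nonneg _) (hp i) 2
    calc η * p i (f i - u)
        ≤ D i - D (i + 1) + η ^ 2 * ‖p i‖ ^ 2 / (2 * μ) :=
          mirror_descent_step hS hμ hΦsc (hstep i hi1 hit) (isMinOn_iff.mpr hmin) hmem hu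
            (hΦ _ _)
      _ ≤ D i - D (i + 1) + η ^ 2 * Λ ^ 2 / (2 * μ) := by gcongr
  have htelescope : ∑ i ∈ Finset.Icc 1 t, (D i - D (i + 1)) = D 1 - D (t + 1) := by
    have h := Finset.sum_Ico_sub D (by omega : 1 ≤ t + 1)
    rw [Finset.Ico_add_one_right_eq_Icc] at h
    rw [← neg_sub, ← h, ← Finset.sum_neg_distrib]
    simp only [neg_sub]
  have hlast : 0 ≤ D (t + 1) :=
    (by positivity : 0 ≤ μ / 2 * ‖u - f (t + 1)‖ ^ 2).trans (sq_norm_le_bregmanDiv hΦsc _ _)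
  calc η * ∑ i ∈ Finset.Icc 1 t, p i (f i - u)
      = ∑ i ∈ Finset.Icc 1 t, η * p i (f i - u) := Finset.mul_sum _ _ _
    _ ≤ ∑ i ∈ Finset.Icc 1 t, ((D i - D (i + 1)) + η ^ 2 * Λ ^ 2 / (2 * μ)) :=
        Finset.sum_le_sum hstepwise
    _ = D 1 - D (t + 1) + t * (η ^ 2 * Λ ^ 2 / (2 * μ)) := by
        rw [Finset.sum_add_distrib, htelescope, Finset.sum_const, Nat.card_Icc,
          Nat.add_sub_cancel, nsmul_eq_mul]
    _ ≤ D 1 + t * (η ^ 2 * Λ ^ 2 / (2 * μ)) := by linarith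

end MirrorDescent

theorem card_mul_sub_le_sum_sub_of_subgradient {B ι : Type*} [NormedAddCommGroup B]
    [NormedSpace ℝ B] {L : B → ℝ} {DL : B → (B →L[ℝ] ℝ)}
    (hL : ∀ f f₀ : B, L f - L f₀ ≥ DL f₀ (f - f₀)) {s : Finset ι} (hs : s.Nonempty)
    (x : ι → B) (u : B) :
    (s.card : ℝ) * (L ((1 / (s.card : ℝ)) • ∑ i ∈ s, x i) - L u) ≤ ∑ i ∈ s, (L (x i) - L u) := by
  set a := (1 / (s.card : ℝ)) • ∑ i ∈ s, x i
  have hcard : (s.card : ℝ) ≠ 0 := Nat.cast_ne_zero.mpr hs.card_pos.ne'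
  have hcentered : ∑ i ∈ s, (x i - a) = 0 := by
    rw [Finset.sum_sub_distrib, Finset.sum_const, ← Nat.cast_smul_eq_nsmul ℝ, smul_smul,
      mul_one_div_cancel hcard, one_smul, sub_self]
  have hsub : ∑ i ∈ s, DL a (x i - a) ≤ ∑ i ∈ s, (L (x i) - L a) :=
    Finset.sum_le_sum fun i _ => hL (x i) a
  rw [← map_sum, hcentered, map_zero] at hsub
  simp only [Finset.sum_sub_distrib, Finset.sum_const, nsmul_eq_mul] at hsub ⊢
  linarith

theorem mirror_descent_step_size_balance {R Λ μ t η : ℝ} (hR : 0 < R) (hΛ : 0 < Λ)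
    (hμ : 0 < μ) (ht : 0 < t) (hη : η = R / Λ * Real.sqrt (2 * μ / t)) :
    (R ^ 2 + t * (η ^ 2 * Λ ^ 2 / (2 * μ))) / (η * t) =
      Real.sqrt 2 * R * Λ / Real.sqrt (μ * t) := by
  have hη' : η = R * Real.sqrt 2 * Real.sqrt μ / (Λ * Real.sqrt t) := by
    rw [hη, Real.sqrt_div (by positivity), Real.sqrt_mul zero_le_two]
    field_simp
  have h2 : Real.sqrt 2 ^ 2 = 2 := Real.sq_sqrt zero_le_two
  have hμ' : Real.sqrt μ ^ 2 = μ := Real.sq_sqrt hμ.le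
  have ht' : Real.sqrt t ^ 2 = t := Real.sq_sqrt ht.le
  have : 0 < Real.sqrt μ := Real.sqrt_pos.mpr hμ
  have : 0 < Real.sqrt t := Real.sqrt_pos.mpr ht
  rw [hη', Real.sqrt_mul hμ.le]
  field_simp
  rw [h2, hμ', ht']
  ring

theorem stmt_5_general {B : Type*} [NormedAddCommGroup B] [NormedSpace ℝ B]
    (S : Set B) (hS : Convex ℝ S)
    (L Φ : B → ℝ) (DL DΦ : B → (B →L[ℝ] ℝ)) (Λ μ R : ℝ)
    (hΛ : 0 < Λ) (hμ : 0 < μ) (hR : 0 < R)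
    (hLconv : ∀ f f₀ : B, L f - L f₀ ≥ DL f₀ (f - f₀))
    (hLip : ∀ f : B, ‖DL f‖ ≤ Λ)
    (hgateaux : ∀ f h : B,
      Tendsto (fun s : ℝ => (Φ (f + s • h) - Φ f) / s) (𝓝[≠] (0 : ℝ)) (𝓝 (DΦ f h)))
    (hΦsc : ∀ f f₀ : B, Φ f - Φ f₀ ≥ DΦ f₀ (f - f₀) + μ / 2 * ‖f - f₀‖ ^ 2)
    (fstar : B) (hfstarS : fstar ∈ S)
    (t : ℕ) (ht : 1 ≤ t) (η : ℝ) (hη : η = R / Λ * Real.sqrt (2 * μ / t))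
    (f h : ℕ → B)
    (hinit : bregmanDiv Φ DΦ fstar (f 1) ≤ R ^ 2)
    (hstep : ∀ i : ℕ, 1 ≤ i → i ≤ t → DΦ (h (i + 1)) = DΦ (f i) - η • DL (f i))
    (hproj : ∀ i : ℕ, 1 ≤ i → i ≤ t → f (i + 1) ∈ S ∧
      ∀ g ∈ S, bregmanDiv Φ DΦ (f (i + 1)) (h (i + 1)) ≤ bregmanDiv Φ DΦ g (h (i + 1))) :
    L ((1 / (t : ℝ)) • ∑ i ∈ Finset.Icc 1 t, f i) - L fstar ≤
      Real.sqrt 2 * R * Λ / Real.sqrt (μ * t) := by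
  have ht0 : (0 : ℝ) < t := by exact_mod_cast ht
  have hη0 : 0 < η := by rw [hη]; positivity
  have hregret := mirror_descent_regret hS hμ hΦsc
    (fun x v => (hgateaux x v).mono_left (nhdsGT_le_nhdsNE 0)) (fun i => hLip (f i))
    hfstarS hstep hproj
  have hjensen := card_mul_sub_le_sum_sub_of_subgradient hLconv
    (Finset.nonempty_Icc.mpr ht) f fstar
  rw [Nat.card_Icc, Nat.add_sub_cancel] at hjensen
  have hlinear : ∑ i ∈ Finset.Icc 1 t, (L (f i) - L fstar) ≤
      ∑ i ∈ Finset.Icc 1 t, DL (f i) (f i - fstar) :=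
    Finset.sum_le_sum fun i _ => by
      have := hLconv fstar (f i)
      simp only [map_sub] at this ⊢
      linarith
  set avg := (1 / (t : ℝ)) • ∑ i ∈ Finset.Icc 1 t, f i
  rw [← mirror_descent_step_size_balance hR hΛ hμ ht0 hη, le_div_iff₀ (by positivity)]
  calc (L avg - L fstar) * (η * t) = η * (t * (L avg - L fstar)) := by ring
    _ ≤ η * ∑ i ∈ Finset.Icc 1 t, DL (f i) (f i - fstar) := by
        gcongr
        exact hjensen.trans hlinear
    _ ≤ bregmanDiv Φ DΦ fstar (f 1) + t * (η ^ 2 * Λ ^ 2 / (2 * μ)) := hregret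
    _ ≤ R ^ 2 + t * (η ^ 2 * Λ ^ 2 / (2 * μ)) := by gcongr

/-- `O(1/√t)` convergence of projected mirror descent for a convex `Λ`-Lipschitz
loss over a convex set `S`, with a Gâteaux differentiable `μ`-strongly convex mirror map. -/
theorem stmt_5 {B : Type*} [NormedAddCommGroup B] [NormedSpace ℝ B] [CompleteSpace B]
    (S : Set B) (hS : Convex ℝ S)
    (L Φ : B → ℝ) (DL DΦ : B → (B →L[ℝ] ℝ)) (Λ μ R : ℝ)
    (hΛ : 0 < Λ) (hμ : 0 < μ) (hR : 0 < R)
    (hLconv : ∀ f f₀ : B, L f - L f₀ ≥ DL f₀ (f - f₀))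
    (hLip : ∀ f : B, ‖DL f‖ ≤ Λ)
    (hgateaux : ∀ f h : B,
      Tendsto (fun s : ℝ => (Φ (f + s • h) - Φ f) / s) (𝓝[≠] (0 : ℝ)) (𝓝 (DΦ f h)))
    (hΦsc : ∀ f f₀ : B, Φ f - Φ f₀ ≥ DΦ f₀ (f - f₀) + μ / 2 * ‖f - f₀‖ ^ 2)
    (fstar : B) (hfstarS : fstar ∈ S) (hmin : ∀ g ∈ S, L fstar ≤ L g)
    (t : ℕ) (ht : 1 ≤ t) (η : ℝ) (hη : η = R / Λ * Real.sqrt (2 * μ / t))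
    (f h : ℕ → B)
    (hf1S : f 1 ∈ S) (hinit : bregmanDiv Φ DΦ fstar (f 1) ≤ R ^ 2)
    (hfS : ∀ i : ℕ, 1 ≤ i → i ≤ t → f i ∈ S)
    (hstep : ∀ i : ℕ, 1 ≤ i → i ≤ t → DΦ (h (i + 1)) = DΦ (f i) - η • DL (f i))
    (hproj : ∀ i : ℕ, 1 ≤ i → i ≤ t → f (i + 1) ∈ S ∧
      ∀ g ∈ S, bregmanDiv Φ DΦ (f (i + 1)) (h (i + 1)) ≤ bregmanDiv Φ DΦ g (h (i + 1))) :
    L ((1 / (t : ℝ)) • ∑ i ∈ Finset.Icc 1 t, f i) - L fstar ≤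
      Real.sqrt 2 * R * Λ / Real.sqrt (μ * t) :=
  stmt_5_general S hS L Φ DL DΦ Λ μ R hΛ hμ hR hLconv hLip hgateaux hΦsc fstar hfstarS t ht η hη f h
    hinit hstep hproj
end

section
/- Let B be a real Banach space, L, Φ : B → ℝ functionals, and DL, DΦ : B → B* maps such that: (i) L is γ-smooth with subgradient selection DL; (ii) Φ is ν-strongly convex with subgradient selection DΦ; (iii) DΦ satisfies the cocoercivity inequality ⟨f − f', DΦ(f) − DΦ(f')⟩ ≥ κ·‖DΦ(f) − DΦ(f')‖_{B*}² for all f, f' ∈ B and some κ > 0. Suppose f, f̂ ∈ B and 0 < η ≤ 2ν/γ satisfy the mirror descent step DΦ(f̂) = DΦ(f) − η·DL(f). Then both ‖f̂ − f‖_B ≥ κη·‖DL(f)‖_{B*} and the descent inequality L(f̂) ≤ L(f) − ((2ν − γη)·κ²·η/2)·‖DL(f)‖_{B*}² hold. -/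
/-!
Write `d = f̂ - f` and `ψ = DΦ(f̂) - DΦ(f) = -η DL(f)`. Cocoercivity gives `κ‖ψ‖² ≤ ψ(d) ≤ ‖ψ‖‖d‖`,
hence `κη‖DL(f)‖ ≤ ‖d‖`. Adding the two strong-convexity inequalities between `f` and `f̂` gives
`ν‖d‖² ≤ ψ(d) = -η DL(f)(d)`, so smoothness of `L` yields
`η(L(f̂) - L(f)) ≤ -(2ν - γη)/2 · ‖d‖²`, and the first bound on `‖d‖` finishes the estimate.
-/

section DualPairing

variable {E : Type*} [SeminormedAddCommGroup E] [NormedSpace ℝ E]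

theorem mul_norm_le_of_mul_norm_sq_le_apply {ψ : E →L[ℝ] ℝ} {d : E} {κ : ℝ}
    (h : κ * ‖ψ‖ ^ 2 ≤ ψ d) : κ * ‖ψ‖ ≤ ‖d‖ := by
  rcases (norm_nonneg ψ).eq_or_lt with hψ | hψ
  · rw [← hψ, mul_zero]
    exact norm_nonneg d
  · refine le_of_mul_le_mul_left ?_ hψ
    calc ‖ψ‖ * (κ * ‖ψ‖) = κ * ‖ψ‖ ^ 2 := by ring
      _ ≤ ψ d := h
      _ ≤ ‖ψ‖ * ‖d‖ := (Real.le_norm_self _).trans (ψ.le_opNorm d)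

theorem mul_norm_sq_le_apply_sub_of_stronglyConvex {Φ : E → ℝ} {DΦ : E → E →L[ℝ] ℝ} {ν : ℝ}
    (hΦ : ∀ f f₀ : E, Φ f - Φ f₀ ≥ DΦ f₀ (f - f₀) + ν / 2 * ‖f - f₀‖ ^ 2) (x y : E) :
    ν * ‖x - y‖ ^ 2 ≤ (DΦ x - DΦ y) (x - y) := by
  have hxy := hΦ x y
  have hyx := hΦ y x
  rw [← neg_sub x y, norm_neg, map_neg] at hyx
  rw [sub_apply]
  linarith

end DualPairing

theorem stmt_16_general {B : Type*} [NormedAddCommGroup B] [NormedSpace ℝ B]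
    (L Φ : B → ℝ) (DL DΦ : B → (B →L[ℝ] ℝ)) (γ ν κ η : ℝ)
    (hγ : 0 < γ) (hκ : 0 < κ)
    (hLsm : ∀ f f₀ : B, L f - L f₀ ≤ DL f₀ (f - f₀) + γ / 2 * ‖f - f₀‖ ^ 2)
    (hΦsc : ∀ f f₀ : B, Φ f - Φ f₀ ≥ DΦ f₀ (f - f₀) + ν / 2 * ‖f - f₀‖ ^ 2)
    (hco : ∀ f f' : B, (DΦ f - DΦ f') (f - f') ≥ κ * ‖DΦ f - DΦ f'‖ ^ 2)
    (f fhat : B) (hη : 0 < η) (hη2 : η ≤ 2 * ν / γ)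
    (hstep : DΦ fhat = DΦ f - η • DL f) :
    κ * η * ‖DL f‖ ≤ ‖fhat - f‖ ∧
      L fhat ≤ L f - (2 * ν - γ * η) * κ ^ 2 * η / 2 * ‖DL f‖ ^ 2 := by
  have hψ : DΦ fhat - DΦ f = -(η • DL f) := by rw [hstep]; abel
  have hψ_norm : ‖DΦ fhat - DΦ f‖ = η * ‖DL f‖ := by
    rw [hψ, norm_neg, norm_smul, Real.norm_of_nonneg hη.le]
  have hdist : κ * η * ‖DL f‖ ≤ ‖fhat - f‖ := by
    simpa only [hψ_norm, mul_assoc] using mul_norm_le_of_mul_norm_sq_le_apply (hco fhat f)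
  refine ⟨hdist, ?_⟩
  have hmono : ν * ‖fhat - f‖ ^ 2 ≤ -(η * DL f (fhat - f)) := by
    simpa [hψ] using mul_norm_sq_le_apply_sub_of_stronglyConvex hΦsc fhat f
  have hγη : 0 ≤ 2 * ν - γ * η := by
    have := (le_div_iff₀ hγ).mp hη2
    linarith
  have hdist_sq : (κ * η * ‖DL f‖) ^ 2 ≤ ‖fhat - f‖ ^ 2 := by
    gcongr
  have hsmooth := mul_le_mul_of_nonneg_left (hLsm fhat f) hη.le
  have hgap := mul_le_mul_of_nonneg_left hdist_sq (div_nonneg hγη zero_le_two)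
  refine le_of_mul_le_mul_left ?_ hη
  calc η * L fhat ≤ η * L f - (2 * ν - γ * η) / 2 * ‖fhat - f‖ ^ 2 := by linarith
    _ ≤ η * (L f - (2 * ν - γ * η) * κ ^ 2 * η / 2 * ‖DL f‖ ^ 2) := by linarith

/-- Per-iteration descent estimate for mirror descent: if
`DΦ(f̂) = DΦ(f) − η·DL(f)` with `0 < η ≤ 2ν/γ`, for a `γ`-smooth loss `L`, a `ν`-strongly convex
mirror map `Φ`, and a `κ`-cocoercive `DΦ`, then `‖f̂ − f‖ ≥ κη‖DL(f)‖` and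
`L(f̂) ≤ L(f) − ((2ν − γη)κ²η/2)‖DL(f)‖²`. -/
theorem stmt_16 {B : Type*} [NormedAddCommGroup B] [NormedSpace ℝ B] [CompleteSpace B]
    (L Φ : B → ℝ) (DL DΦ : B → (B →L[ℝ] ℝ)) (γ ν κ η : ℝ)
    (hγ : 0 < γ) (hν : 0 < ν) (hκ : 0 < κ)
    (hLsm : ∀ f f₀ : B, L f - L f₀ ≤ DL f₀ (f - f₀) + γ / 2 * ‖f - f₀‖ ^ 2)
    (hΦsc : ∀ f f₀ : B, Φ f - Φ f₀ ≥ DΦ f₀ (f - f₀) + ν / 2 * ‖f - f₀‖ ^ 2)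
    (hco : ∀ f f' : B, (DΦ f - DΦ f') (f - f') ≥ κ * ‖DΦ f - DΦ f'‖ ^ 2)
    (f fhat : B) (hη : 0 < η) (hη2 : η ≤ 2 * ν / γ)
    (hstep : DΦ fhat = DΦ f - η • DL f) :
    κ * η * ‖DL f‖ ≤ ‖fhat - f‖ ∧
      L fhat ≤ L f - (2 * ν - γ * η) * κ ^ 2 * η / 2 * ‖DL f‖ ^ 2 :=
  stmt_16_general L Φ DL DΦ γ ν κ η hγ hκ hLsm hΦsc hco f fhat hη hη2 hstep
end
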